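/- Suppose Assumption A1 holds with parameter δ satisfying 0 < δ ≤ σ_r/16. Then for any Z ∈ R^{n×r} with d(Z, Z*) ≤ √((3/16) σ_r), setting H = Z − Z̄, we have 2 ‖H H^T‖_F² − δ ‖H‖_F² ≤ (1/m) Σ_{i=1}^m trace(H^T A_i H)² ≤ δ ‖H‖_F² + 2 ‖H H^T‖_F². -/

import Mathlib

open Matrix MeasureTheory ProbabilityTheory Real
open scoped BigOperators ENNReal

noncomputable section

/-- Frobenius norm of a real matrix. -/
def frobNorm {a b : ℕ} (M : Matrix (Fin a) (Fin b) ℝ) : ℝ :=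
  Real.sqrt (∑ i, ∑ j, (M i j) ^ 2)

/-- Frobenius (trace) inner product `⟨M, N⟩ = trace (Mᵀ N)`. -/
def frobInner {a b : ℕ} (M N : Matrix (Fin a) (Fin b) ℝ) : ℝ :=
  ∑ i, ∑ j, M i j * N i j

/-- Operator (spectral) norm of a real square matrix. -/
def opNorm {n : ℕ} (M : Matrix (Fin n) (Fin n) ℝ) : ℝ :=
  ‖LinearMap.toContinuousLinearMap (Matrix.toEuclideanLin M)‖

/-- An `r × r` real matrix is orthonormal if `U Uᵀ = Uᵀ U = I`. -/
def IsOrthoMat {r : ℕ} (U : Matrix (Fin r) (Fin r) ℝ) : Prop :=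
  U * Uᵀ = 1 ∧ Uᵀ * U = 1

/-- The solution set `S̃ = {Z* U : U orthonormal}`. -/
def solSet {n r : ℕ} (Zstar : Matrix (Fin n) (Fin r) ℝ) : Set (Matrix (Fin n) (Fin r) ℝ) :=
  {Zt | ∃ U, IsOrthoMat U ∧ Zt = Zstar * U}

/-- The distance `d(Z, Z*) = min_{Z̃ ∈ S̃} ‖Z − Z̃‖_F`. -/
def dSol {n r : ℕ} (Z Zstar : Matrix (Fin n) (Fin r) ℝ) : ℝ :=
  ⨅ Zt : solSet Zstar, frobNorm (Z - (Zt : Matrix (Fin n) (Fin r) ℝ))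

/-- `Zbar` is a matrix in the solution set closest to `Z`. -/
def IsClosest {n r : ℕ} (Zstar Z Zbar : Matrix (Fin n) (Fin r) ℝ) : Prop :=
  Zbar ∈ solSet Zstar ∧ ∀ Zt ∈ solSet Zstar, frobNorm (Z - Zbar) ≤ frobNorm (Z - Zt)

/-- The gradient `∇f(Z) = (1/m) Σ_i (trace(Zᵀ A_i Z) − b_i) A_i Z`. -/
def gradf {n r m : ℕ} (A : Fin m → Matrix (Fin n) (Fin n) ℝ) (b : Fin m → ℝ)
    (Z : Matrix (Fin n) (Fin r) ℝ) : Matrix (Fin n) (Fin r) ℝ :=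
  (1 / (m : ℝ)) • ∑ i, (Matrix.trace (Zᵀ * A i * Z) - b i) • (A i * Z)

/-- Assumption A1 with parameter `δ`. -/
def AssumpA1 {n m : ℕ} (A : Fin m → Matrix (Fin n) (Fin n) ℝ) (σ1 : ℝ) (r : ℕ)
    (δ : ℝ) : Prop :=
  ∀ u : Fin n → ℝ, Real.sqrt (∑ i, u i ^ 2) ≤ Real.sqrt σ1 →
    opNorm ((1 / (m : ℝ)) • ∑ i, (u ⬝ᵥ (A i).mulVec u) • A i - (2 : ℝ) • vecMulVec u u)
      ≤ δ / r

/-- Assumption A2 with parameter `δ`. -/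
def AssumpA2 {n r m : ℕ} (A : Fin m → Matrix (Fin n) (Fin n) ℝ)
    (Zstar : Matrix (Fin n) (Fin r) ℝ) (δ : ℝ) : Prop :=
  ∀ Zt ∈ solSet Zstar, ∀ s k : Fin r,
    opNorm ((1 / (m : ℝ)) •
        ∑ i, (2 : ℝ) • (A i * vecMulVec (fun j => Zt j s) (fun j => Zt j k) * A i)
      - ((2 * ((fun j => Zt j s) ⬝ᵥ fun j => Zt j k)) • (1 : Matrix (Fin n) (Fin n) ℝ)
          + (2 : ℝ) • vecMulVec (fun j => Zt j k) (fun j => Zt j s)))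
      ≤ δ / r

/-! Write `h_s` for the columns of `H = Z - Zbar`. Since `trace (Hᵀ A_i H) = ∑_s h_sᵀ A_i h_s`,
the quantity `(1/m) ∑_i trace (Hᵀ A_i H)² - 2 ‖H Hᵀ‖_F²` equals `∑_{s,k} h_kᵀ M_s h_k`, where
`M_s = (1/m) ∑_i (h_sᵀ A_i h_s) A_i - 2 h_s h_sᵀ` is the operator of Assumption A1 at `u = h_s`.
Every column satisfies `‖h_s‖ ≤ ‖H‖_F ≤ d(Z, Z*) ≤ √(3σ_r/16) ≤ √σ_1`, so A1 gives
`|h_kᵀ M_s h_k| ≤ (δ/r) ‖h_k‖²`; summing over `s` and `k` gives `δ ‖H‖_F²`. -/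

lemma abs_dotProduct_mulVec_self_le_opNorm {n : ℕ} (M : Matrix (Fin n) (Fin n) ℝ)
    (v : Fin n → ℝ) : |v ⬝ᵥ M *ᵥ v| ≤ opNorm M * ∑ i, v i ^ 2 := by
  set T := LinearMap.toContinuousLinearMap (Matrix.toEuclideanLin M)
  set w : EuclideanSpace ℝ (Fin n) := WithLp.toLp 2 v
  have hquad : v ⬝ᵥ M *ᵥ v = inner ℝ w (T w) := by
    simp [T, w, EuclideanSpace.inner_toLp_toLp, dotProduct_comm]
  have hnorm : ‖w‖ ^ 2 = ∑ i, v i ^ 2 := by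
    rw [← real_inner_self_eq_norm_sq, EuclideanSpace.inner_toLp_toLp]
    simp [dotProduct, sq]
  calc |v ⬝ᵥ M *ᵥ v| ≤ ‖w‖ * ‖T w‖ := hquad ▸ abs_real_inner_le_norm w (T w)
    _ ≤ ‖w‖ * (‖T‖ * ‖w‖) := by gcongr; exact T.le_opNorm w
    _ = opNorm M * ∑ i, v i ^ 2 := by rw [opNorm, ← hnorm]; ring

lemma dotProduct_vecMulVec_self_mulVec {n : ℕ} (u v : Fin n → ℝ) :
    v ⬝ᵥ vecMulVec u u *ᵥ v = (u ⬝ᵥ v) ^ 2 := by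
  rw [vecMulVec_mulVec, op_smul_eq_smul, dotProduct_smul, smul_eq_mul, dotProduct_comm v u, sq]

lemma dotProduct_mean_sub_vecMulVec_mulVec {n m : ℕ} (A : Fin m → Matrix (Fin n) (Fin n) ℝ)
    (c : Fin m → ℝ) (u v : Fin n → ℝ) :
    v ⬝ᵥ ((1 / (m : ℝ)) • ∑ i, c i • A i - (2 : ℝ) • vecMulVec u u) *ᵥ v
      = (1 / (m : ℝ)) * ∑ i, c i * (v ⬝ᵥ A i *ᵥ v) - 2 * (u ⬝ᵥ v) ^ 2 := by
  simp only [sub_mulVec, smul_mulVec, sum_mulVec, dotProduct_sub, dotProduct_smul,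
    dotProduct_sum, dotProduct_vecMulVec_self_mulVec, smul_eq_mul]

lemma AssumpA1.abs_mean_mul_sub_le {n m r : ℕ} {A : Fin m → Matrix (Fin n) (Fin n) ℝ}
    {σ1 δ : ℝ} (hA1 : AssumpA1 A σ1 r δ) {u : Fin n → ℝ}
    (hu : Real.sqrt (∑ i, u i ^ 2) ≤ Real.sqrt σ1) (v : Fin n → ℝ) :
    |(1 / (m : ℝ)) * ∑ i, (u ⬝ᵥ A i *ᵥ u) * (v ⬝ᵥ A i *ᵥ v) - 2 * (u ⬝ᵥ v) ^ 2|
      ≤ δ / r * ∑ i, v i ^ 2 := by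
  rw [← dotProduct_mean_sub_vecMulVec_mulVec]
  exact (abs_dotProduct_mulVec_self_le_opNorm _ v).trans
    (mul_le_mul_of_nonneg_right (hA1 u hu) (by positivity))

lemma trace_transpose_mul_mul_eq_sum {n r : ℕ} (H : Matrix (Fin n) (Fin r) ℝ)
    (A : Matrix (Fin n) (Fin n) ℝ) : trace (Hᵀ * A * H) = ∑ s, Hᵀ s ⬝ᵥ A *ᵥ Hᵀ s := by
  simp only [trace, diag, mul_apply, dotProduct, mulVec, transpose_apply, Finset.mul_sum,
    Finset.sum_mul]
  refine Finset.sum_congr rfl fun s _ => Finset.sum_comm.trans ?_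
  exact Finset.sum_congr rfl fun j _ => Finset.sum_congr rfl fun l _ => by ring

lemma frobNorm_sq {a b : ℕ} (M : Matrix (Fin a) (Fin b) ℝ) :
    frobNorm M ^ 2 = ∑ i, ∑ j, M i j ^ 2 := by
  rw [frobNorm, Real.sq_sqrt (by positivity)]

lemma frobNorm_sq_eq_sum_transpose {a b : ℕ} (M : Matrix (Fin a) (Fin b) ℝ) :
    frobNorm M ^ 2 = ∑ j, ∑ i, Mᵀ j i ^ 2 := by
  rw [frobNorm_sq, Finset.sum_comm]
  rfl

lemma sqrt_sum_sq_transpose_le_frobNorm {a b : ℕ} (M : Matrix (Fin a) (Fin b) ℝ) (j : Fin b) :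
    Real.sqrt (∑ i, Mᵀ j i ^ 2) ≤ frobNorm M := by
  have hcol : ∑ i, Mᵀ j i ^ 2 ≤ frobNorm M ^ 2 := by
    rw [frobNorm_sq_eq_sum_transpose]
    exact Finset.single_le_sum (f := fun k => ∑ i, Mᵀ k i ^ 2) (fun k _ => by positivity)
      (Finset.mem_univ j)
  exact (Real.sqrt_le_sqrt hcol).trans_eq (Real.sqrt_sq (Real.sqrt_nonneg _))

lemma frobNorm_sq_eq_trace {a b : ℕ} (M : Matrix (Fin a) (Fin b) ℝ) :
    frobNorm M ^ 2 = trace (M * Mᵀ) := by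
  rw [frobNorm_sq]
  simp only [trace, diag, mul_apply, transpose_apply, sq]

lemma frobNorm_mul_transpose_sq {n r : ℕ} (H : Matrix (Fin n) (Fin r) ℝ) :
    frobNorm (H * Hᵀ) ^ 2 = ∑ s, ∑ k, (Hᵀ s ⬝ᵥ Hᵀ k) ^ 2 := by
  have hcycle : frobNorm (H * Hᵀ) ^ 2 = frobNorm (Hᵀ * H) ^ 2 := by
    simp only [frobNorm_sq_eq_trace, transpose_mul, transpose_transpose, ← Matrix.mul_assoc]
    rw [trace_mul_comm (H * Hᵀ * H)]
    simp only [Matrix.mul_assoc]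
  rw [hcycle, frobNorm_sq]
  rfl

lemma abs_mean_sq_trace_sub_two_frobNorm_sq_le {n r m : ℕ}
    (A : Fin m → Matrix (Fin n) (Fin n) ℝ) (H : Matrix (Fin n) (Fin r) ℝ) {ε : ℝ}
    (hε : ∀ s k, |(1 / (m : ℝ)) * ∑ i, (Hᵀ s ⬝ᵥ A i *ᵥ Hᵀ s) * (Hᵀ k ⬝ᵥ A i *ᵥ Hᵀ k)
        - 2 * (Hᵀ s ⬝ᵥ Hᵀ k) ^ 2| ≤ ε * ∑ j, Hᵀ k j ^ 2) :
    |(1 / (m : ℝ)) * ∑ i, trace (Hᵀ * A i * H) ^ 2 - 2 * frobNorm (H * Hᵀ) ^ 2|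
      ≤ r * ε * frobNorm H ^ 2 := by
  have hexpand : (1 / (m : ℝ)) * ∑ i, trace (Hᵀ * A i * H) ^ 2 - 2 * frobNorm (H * Hᵀ) ^ 2
      = ∑ s, ∑ k, ((1 / (m : ℝ)) * ∑ i, (Hᵀ s ⬝ᵥ A i *ᵥ Hᵀ s) * (Hᵀ k ⬝ᵥ A i *ᵥ Hᵀ k)
        - 2 * (Hᵀ s ⬝ᵥ Hᵀ k) ^ 2) := by
    have hsq : ∀ i, trace (Hᵀ * A i * H) ^ 2
        = ∑ s, ∑ k, (Hᵀ s ⬝ᵥ A i *ᵥ Hᵀ s) * (Hᵀ k ⬝ᵥ A i *ᵥ Hᵀ k) := fun i => by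
      rw [trace_transpose_mul_mul_eq_sum, sq, Finset.sum_mul_sum]
    have hmean : (1 / (m : ℝ)) * ∑ i, trace (Hᵀ * A i * H) ^ 2
        = ∑ s, ∑ k, (1 / (m : ℝ)) * ∑ i, (Hᵀ s ⬝ᵥ A i *ᵥ Hᵀ s) * (Hᵀ k ⬝ᵥ A i *ᵥ Hᵀ k) := by
      simp only [hsq, Finset.mul_sum]
      rw [Finset.sum_comm]
      exact Finset.sum_congr rfl fun s _ => Finset.sum_comm
    simp only [hmean, frobNorm_mul_transpose_sq, Finset.mul_sum, ← Finset.sum_sub_distrib]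
  calc |(1 / (m : ℝ)) * ∑ i, trace (Hᵀ * A i * H) ^ 2 - 2 * frobNorm (H * Hᵀ) ^ 2|
      ≤ ∑ s : Fin r, ∑ k, ε * ∑ j, Hᵀ k j ^ 2 := by
        rw [hexpand]
        refine (Finset.abs_sum_le_sum_abs _ _).trans (Finset.sum_le_sum fun s _ => ?_)
        exact (Finset.abs_sum_le_sum_abs _ _).trans (Finset.sum_le_sum fun k _ => hε s k)
    _ = r * ε * frobNorm H ^ 2 := by
        rw [frobNorm_sq_eq_sum_transpose, ← Finset.mul_sum]
        simp only [Finset.sum_const, Finset.card_univ, Fintype.card_fin, nsmul_eq_mul]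
        ring

lemma IsClosest.frobNorm_sub_le_dSol {n r : ℕ} {Zstar Z Zbar : Matrix (Fin n) (Fin r) ℝ}
    (h : IsClosest Zstar Z Zbar) : frobNorm (Z - Zbar) ≤ dSol Z Zstar :=
  have : Nonempty (solSet Zstar) := ⟨⟨Zbar, h.1⟩⟩
  le_ciInf fun Zt => h.2 Zt.1 Zt.2

theorem lemma_A1_quadratic_bounds_general {n r m : ℕ} (hr : 0 < r)
    (A : Fin m → Matrix (Fin n) (Fin n) ℝ)
(Zstar : Matrix (Fin n) (Fin r) ℝ)
    (sig : Fin r → ℝ) (hpos : ∀ s, 0 < sig s)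
    (hmono : ∀ s t : Fin r, s ≤ t → sig t ≤ sig s)
    (δ : ℝ)
    (hA1 : AssumpA1 A (sig ⟨0, hr⟩) r δ)
    (Z Zbar : Matrix (Fin n) (Fin r) ℝ)
    (hZ : dSol Z Zstar ≤ Real.sqrt (3 / 16 * (sig ⟨r - 1, Nat.sub_lt hr Nat.one_pos⟩)))
    (hZbar : IsClosest Zstar Z Zbar) :
    2 * frobNorm ((Z - Zbar) * (Z - Zbar)ᵀ) ^ 2 - δ * frobNorm (Z - Zbar) ^ 2 ≤
      (1 / (m : ℝ)) * ∑ i, (Matrix.trace ((Z - Zbar)ᵀ * A i * (Z - Zbar))) ^ 2 ∧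
    (1 / (m : ℝ)) * ∑ i, (Matrix.trace ((Z - Zbar)ᵀ * A i * (Z - Zbar))) ^ 2 ≤
      δ * frobNorm (Z - Zbar) ^ 2 + 2 * frobNorm ((Z - Zbar) * (Z - Zbar)ᵀ) ^ 2 := by
  set H := Z - Zbar
  set last : Fin r := ⟨r - 1, Nat.sub_lt hr Nat.one_pos⟩
  have hσ : 3 / 16 * sig last ≤ sig ⟨0, hr⟩ := by
    linarith [hpos last, hmono ⟨0, hr⟩ last (Fin.mk_le_mk.mpr (Nat.zero_le _))]
  have hcol (s : Fin r) : Real.sqrt (∑ i, Hᵀ s i ^ 2) ≤ Real.sqrt (sig ⟨0, hr⟩) :=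
    calc Real.sqrt (∑ i, Hᵀ s i ^ 2) ≤ frobNorm H := sqrt_sum_sq_transpose_le_frobNorm H s
      _ ≤ dSol Z Zstar := hZbar.frobNorm_sub_le_dSol
      _ ≤ Real.sqrt (3 / 16 * sig last) := hZ
      _ ≤ Real.sqrt (sig ⟨0, hr⟩) := Real.sqrt_le_sqrt hσ
  have hbound := abs_mean_sq_trace_sub_two_frobNorm_sq_le A H
    fun s k => hA1.abs_mean_mul_sub_le (hcol s) (Hᵀ k)
  rw [mul_div_cancel₀ δ (Nat.cast_ne_zero.mpr hr.ne')] at hbound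
  obtain ⟨hlower, hupper⟩ := abs_le.mp hbound
  exact ⟨by linarith, by linarith⟩

theorem lemma_A1_quadratic_bounds {n r m : ℕ} (hr : 0 < r)
    (A : Fin m → Matrix (Fin n) (Fin n) ℝ) (hAsym : ∀ i, (A i).IsSymm)
(Zstar : Matrix (Fin n) (Fin r) ℝ)
    (sig : Fin r → ℝ) (hpos : ∀ s, 0 < sig s)
    (hmono : ∀ s t : Fin r, s ≤ t → sig t ≤ sig s)
    (hspec : ∃ V, IsOrthoMat V ∧ Zstarᵀ * Zstar = V * Matrix.diagonal sig * Vᵀ)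
    (δ : ℝ) (hδ0 : 0 < δ) (hδ : δ ≤ (sig ⟨r - 1, Nat.sub_lt hr Nat.one_pos⟩) / 16)
    (hA1 : AssumpA1 A (sig ⟨0, hr⟩) r δ)
    (Z Zbar : Matrix (Fin n) (Fin r) ℝ)
    (hZ : dSol Z Zstar ≤ Real.sqrt (3 / 16 * (sig ⟨r - 1, Nat.sub_lt hr Nat.one_pos⟩)))
    (hZbar : IsClosest Zstar Z Zbar) :
    2 * frobNorm ((Z - Zbar) * (Z - Zbar)ᵀ) ^ 2 - δ * frobNorm (Z - Zbar) ^ 2 ≤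
      (1 / (m : ℝ)) * ∑ i, (Matrix.trace ((Z - Zbar)ᵀ * A i * (Z - Zbar))) ^ 2 ∧
    (1 / (m : ℝ)) * ∑ i, (Matrix.trace ((Z - Zbar)ᵀ * A i * (Z - Zbar))) ^ 2 ≤
      δ * frobNorm (Z - Zbar) ^ 2 + 2 * frobNorm ((Z - Zbar) * (Z - Zbar)ᵀ) ^ 2 :=
  lemma_A1_quadratic_bounds_general hr A Zstar sig hpos hmono δ hA1 Z Zbar hZ hZbar
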